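/- Let 0 < q < 1 be real. Then \sum_{n \ge 1} (-1)^n (q;q^2)_{n-1} q^{n^2} / (q;q)_{2n-1} = (-q / (-q;q)_\infty) \cdot \omega(q), where \omega(q) := \sum_{n \ge 0} q^{2n(n+1)} / (q;q^2)_{n+1}^2 is Ramanujan's third order mock theta function \omega. -/

import Mathlib

open scoped BigOperators
open Filter Topology

/-- finite q-Pochhammer symbol $(a;q)_n$ -/
noncomputable def qp (a q : ℝ) (n : ℕ) : ℝ := ∏ k ∈ Finset.range n, (1 - a * q ^ k)

/-- infinite q-Pochhammer symbol $(a;q)_\infty$ -/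
noncomputable def qpInf (a q : ℝ) : ℝ := ∏' k : ℕ, (1 - a * q ^ k)

/-- the theta function $j(x,q) = (x;q)_\infty (q/x;q)_\infty (q;q)_\infty$ -/
noncomputable def jth (x q : ℝ) : ℝ := qpInf x q * qpInf (q / x) q * qpInf q q

/-- the Appell-Lerch series $m(x,q,z)$ -/
noncomputable def appellM (x q z : ℝ) : ℝ :=
  (1 / jth z q) *
    ∑' r : ℤ, (-1 : ℝ) ^ r * q ^ (r * (r - 1) / 2) * z ^ r / (1 - q ^ (r - 1) * x * z)

/-- sign function: 1 for r ≥ 0, -1 for r < 0 -/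
def sgn (r : ℤ) : ℤ := if 0 ≤ r then 1 else -1

/-- the Hecke-type double sum $f_{a,b,c}(x,y,q)$ -/
noncomputable def heckeF (a b c : ℤ) (x y q : ℝ) : ℝ :=
  ∑' rs : ℤ × ℤ,
    if sgn rs.1 = sgn rs.2 then
      (sgn rs.1 : ℝ) * (-1 : ℝ) ^ (rs.1 + rs.2) * x ^ rs.1 * y ^ rs.2 *
        q ^ (a * (rs.1 * (rs.1 - 1) / 2) + b * rs.1 * rs.2 + c * (rs.2 * (rs.2 - 1) / 2))
    else 0

/-- the theta quotient $\theta_{n,p}(x,y,q)$ of Hickerson-Mortenson; here real powers of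
the positive real `q` are `Real.rpow`, and `r, s` carry the fractional part of `(n-1)/2`,
so that the exponents of `(-x)` and `(-y)` are integers. -/
noncomputable def thetaNP (n p : ℕ) (x y q : ℝ) : ℝ :=
  (1 / jth (-1) (q ^ (n * p * (2 * n + p)))) *
    ∑ rst ∈ Finset.range p, ∑ sst ∈ Finset.range p,
      let r : ℝ := (rst : ℝ) + Int.fract (((n : ℝ) - 1) / 2)
      let s : ℝ := (sst : ℝ) + Int.fract (((n : ℝ) - 1) / 2)
      let R : ℝ := r - ((n : ℝ) - 1) / 2
      let S : ℝ := s + ((n : ℝ) + 1) / 2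
      q ^ ((n : ℝ) * (R * (R - 1) / 2) + ((n : ℝ) + (p : ℝ)) * R * S + (n : ℝ) * (S * (S - 1) / 2)) *
        (-x) ^ R * (-y) ^ S *
        (jth (q ^ (p ^ 2 * (2 * n + p))) (q ^ (3 * (p ^ 2 * (2 * n + p))))) ^ 3 *
        jth (-(q ^ ((n : ℝ) * (p : ℝ) * (s - r))) * x ^ n / y ^ n) (q ^ (n * p ^ 2)) *
        jth (q ^ ((p : ℝ) * (2 * (n : ℝ) + (p : ℝ)) * (r + s) + (p : ℝ) * ((n : ℝ) + (p : ℝ))) *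
            x ^ p * y ^ p) (q ^ (p ^ 2 * (2 * n + p))) /
        (jth (q ^ ((p : ℝ) * (2 * (n : ℝ) + (p : ℝ)) * r + (p : ℝ) * ((n : ℝ) + (p : ℝ)) / 2) *
              (-y) ^ (n + p) / (-x) ^ n) (q ^ (p ^ 2 * (2 * n + p))) *
          jth (q ^ ((p : ℝ) * (2 * (n : ℝ) + (p : ℝ)) * s + (p : ℝ) * ((n : ℝ) + (p : ℝ)) / 2) *
              (-x) ^ (n + p) / (-y) ^ n) (q ^ (p ^ 2 * (2 * n + p))))

/-!
Since `(q;q)_{2n+1} = (q;q²)_n (q²;q²)_n (1 - q^{2n+1})`, expanding `1/(1 - q^{2n+1})` as a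
geometric series turns the left side into an absolutely convergent double series. Summing over `n`
first, Euler's expansion `(x;Q)_∞ = ∑ (-1)^n Q^{n(n-1)/2} xⁿ / (Q;Q)_n` with `Q = q²` gives
`-q ∑_j q^j (q^{2j+3};q²)_∞ = -q (q;q²)_∞ ∑_j q^j / (q;q²)_{j+1}`. Fine's identity
`∑ tⁿ / (a;Q)_{n+1} = ∑ aⁿ Q^{n²} tⁿ / ((a;Q)_{n+1} (t;Q)_{n+1})` at `a = t = q`, `Q = q²`
turns the last series into `ω(q)`, and `(q;q²)_∞ (-q;q)_∞ = 1` by Euler's odd/distinct parts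
identity.

Both series identities come from a first-order `Q`-difference equation in `x` (resp. `t`) satisfied
by both sides: iterating it `N` times and letting `N → ∞`, continuity at `0` forces equality.
-/

open Finset Metric

section Finite

variable {a b q : ℝ}

lemma qp_succ (a q : ℝ) (n : ℕ) : qp a q (n + 1) = qp a q n * (1 - a * q ^ n) :=
  prod_range_succ _ _

lemma qp_succ' (a q : ℝ) (n : ℕ) : qp a q (n + 1) = (1 - a) * qp (a * q) q n := by
  simp only [qp, prod_range_succ', pow_succ', mul_assoc, pow_zero, mul_one]
  ring

lemma qp_two_mul (a q : ℝ) (n : ℕ) :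
    qp a q (2 * n) = qp a (q ^ 2) n * qp (a * q) (q ^ 2) n := by
  induction n with
  | zero => simp [qp]
  | succ n ih =>
    rw [show 2 * (n + 1) = 2 * n + 1 + 1 by ring, qp_succ, qp_succ, ih, qp_succ, qp_succ]
    ring

lemma mul_pow_lt_one (ha : a < 1) (hq0 : 0 ≤ q) (hq1 : q ≤ 1) (k : ℕ) : a * q ^ k < 1 := by
  rcases le_or_gt 0 a with ha0 | ha0
  · exact (mul_le_of_le_one_right ha0 (pow_le_one₀ hq0 hq1)).trans_lt ha
  · exact (mul_nonpos_of_nonpos_of_nonneg ha0.le (pow_nonneg hq0 k)).trans_lt one_pos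

lemma qp_pos (ha : a < 1) (hq0 : 0 ≤ q) (hq1 : q ≤ 1) (n : ℕ) : 0 < qp a q n :=
  prod_pos fun k _ => sub_pos.2 (mul_pow_lt_one ha hq0 hq1 k)

lemma qp_le_qp_left (hab : a ≤ b) (hb : b < 1) (hq0 : 0 ≤ q) (hq1 : q ≤ 1) (n : ℕ) :
    qp b q n ≤ qp a q n :=
  prod_le_prod (fun k _ => (sub_pos.2 (mul_pow_lt_one hb hq0 hq1 k)).le)
    fun k _ => by gcongr

lemma qp_antitone (ha0 : 0 ≤ a) (ha1 : a ≤ 1) (hq0 : 0 ≤ q) (hq1 : q ≤ 1) :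
    Antitone (qp a q) := by
  refine antitone_nat_of_succ_le fun n => ?_
  rw [qp_succ]
  have hn : 0 ≤ a * q ^ n := mul_nonneg ha0 (pow_nonneg hq0 n)
  have hpos : 0 ≤ qp a q n := prod_nonneg fun k _ =>
    sub_nonneg.2 (mul_le_one₀ ha1 (pow_nonneg hq0 k) (pow_le_one₀ hq0 hq1))
  nlinarith

end Finite

section Infinite

variable {a q : ℝ}

lemma summable_mul_pow (a : ℝ) (hq : |q| < 1) : Summable fun k : ℕ => a * q ^ k :=
  (summable_geometric_of_abs_lt_one hq).mul_left a

lemma hasProd_qpInf (a : ℝ) (hq : |q| < 1) : HasProd (fun k => 1 - a * q ^ k) (qpInf a q) := by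
  simp only [sub_eq_add_neg]
  exact (Real.multipliable_one_add_of_summable (summable_mul_pow a hq).neg).hasProd

lemma qpInf_eq_qp_mul (a : ℝ) (hq : |q| < 1) (n : ℕ) :
    qpInf a q = qp a q n * qpInf (a * q ^ n) q := by
  refine (hasProd_qpInf a hq).unique (HasProd.prod_range_mul ?_)
  convert hasProd_qpInf (a * q ^ n) hq using 2 with k
  ring

lemma qpInf_pos (ha : a < 1) (hq0 : 0 ≤ q) (hq1 : q < 1) : 0 < qpInf a q := by
  have hq : |q| < 1 := by rwa [abs_of_nonneg hq0]
  have hlog := Real.summable_log_one_add_of_summable (summable_mul_pow a hq).neg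
  simp only [← sub_eq_add_neg] at hlog
  rw [qpInf, ← Real.rexp_tsum_eq_tprod (fun k => sub_pos.2 (mul_pow_lt_one ha hq0 hq1.le k)) hlog]
  exact Real.exp_pos _

lemma qpInf_le_qp (ha0 : 0 ≤ a) (ha1 : a ≤ 1) (hq0 : 0 ≤ q) (hq1 : q < 1) (n : ℕ) :
    qpInf a q ≤ qp a q n :=
  (qp_antitone ha0 ha1 hq0 hq1.le).le_of_tendsto
    (hasProd_qpInf a (by rwa [abs_of_nonneg hq0])).tendsto_prod_nat n

lemma inv_qp_le_inv_qpInf {b : ℝ} (hab : a ≤ b) (hb0 : 0 ≤ b) (hb1 : b < 1) (hq0 : 0 ≤ q)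
    (hq1 : q < 1) (n : ℕ) : (qp a q n)⁻¹ ≤ (qpInf b q)⁻¹ :=
  inv_anti₀ (qpInf_pos hb1 hq0 hq1)
    ((qpInf_le_qp hb0 hb1.le hq0 hq1 n).trans (qp_le_qp_left hab hb1 hq0 hq1.le n))

lemma qpInf_mul_qpInf_neg (a : ℝ) (hq : |q| < 1) :
    qpInf a q * qpInf (-a) q = qpInf (a ^ 2) (q ^ 2) := by
  have hq2 : |q ^ 2| < 1 := by rw [abs_pow]; exact pow_lt_one₀ (abs_nonneg q) hq two_ne_zero
  refine ((hasProd_qpInf a hq).mul (hasProd_qpInf (-a) hq)).unique ?_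
  convert hasProd_qpInf (a ^ 2) hq2 using 2 with k
  ring

lemma qpInf_eq_mul_qpInf_sq (a : ℝ) (hq : |q| < 1) :
    qpInf a q = qpInf a (q ^ 2) * qpInf (a * q) (q ^ 2) := by
  have hq2 : |q ^ 2| < 1 := by rw [abs_pow]; exact pow_lt_one₀ (abs_nonneg q) hq two_ne_zero
  refine (hasProd_qpInf a hq).unique (HasProd.even_mul_odd ?_ ?_)
  · convert hasProd_qpInf a hq2 using 2 with k
    ring
  · convert hasProd_qpInf (a * q) hq2 using 2 with k
    ring

lemma qpInf_neg_mul_qpInf_sq (hq0 : 0 ≤ q) (hq1 : q < 1) :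
    qpInf (-q) q * qpInf q (q ^ 2) = 1 := by
  have hq : |q| < 1 := by rwa [abs_of_nonneg hq0]
  have h := qpInf_mul_qpInf_neg q hq
  rw [qpInf_eq_mul_qpInf_sq q hq, ← sq] at h
  have hpos : 0 < qpInf (q ^ 2) (q ^ 2) :=
    qpInf_pos (pow_lt_one₀ hq0 hq1 two_ne_zero) (sq_nonneg q) (pow_lt_one₀ hq0 hq1 two_ne_zero)
  refine mul_left_cancel₀ hpos.ne' ?_
  linear_combination h

end Infinite

lemma abs_mul_pow_le (x : ℝ) {Q : ℝ} (hQ0 : 0 ≤ Q) (hQ1 : Q ≤ 1) (n : ℕ) :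
    |x * Q ^ n| ≤ |x| := by
  rw [abs_mul, abs_pow, abs_of_nonneg hQ0]
  exact mul_le_of_le_one_right (abs_nonneg x) (pow_le_one₀ hQ0 hQ1)

lemma tendsto_comp_mul_pow {f : ℝ → ℝ} {r x Q : ℝ} (hf : ContinuousOn f (closedBall 0 r))
    (hx : |x| ≤ r) (hQ0 : 0 ≤ Q) (hQ1 : Q < 1) :
    Tendsto (fun N : ℕ => f (x * Q ^ N)) atTop (𝓝 (f 0)) := by
  have hr : (0 : ℝ) ∈ closedBall 0 r := mem_closedBall_self ((abs_nonneg x).trans hx)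
  refine (hf 0 hr).tendsto.comp
    (tendsto_nhdsWithin_iff.2 ⟨?_, Eventually.of_forall fun N => ?_⟩)
  · simpa using (tendsto_pow_atTop_nhds_zero_of_lt_one hQ0 hQ1).const_mul x
  · rw [mem_closedBall_zero_iff, Real.norm_eq_abs]
    exact (abs_mul_pow_le x hQ0 hQ1.le N).trans hx

noncomputable def eulerTerm (Q x : ℝ) (n : ℕ) : ℝ :=
  (-1) ^ n * Q ^ n.choose 2 * x ^ n / qp Q Q n

section Euler

variable {Q x : ℝ} (hQ0 : 0 ≤ Q) (hQ1 : Q < 1)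
include hQ0 hQ1

lemma abs_eulerTerm_le {r : ℝ} (hx : |x| ≤ r) (n : ℕ) :
    |eulerTerm Q x n| ≤ (qpInf Q Q)⁻¹ * r ^ n := by
  rw [eulerTerm, abs_div, abs_of_pos (qp_pos hQ1 hQ0 hQ1.le n), div_eq_inv_mul]
  simp only [abs_mul, abs_pow, abs_neg, abs_one, one_pow, one_mul, abs_of_nonneg hQ0]
  have hxr : Q ^ n.choose 2 * |x| ^ n ≤ r ^ n :=
    (mul_le_of_le_one_left (by positivity) (pow_le_one₀ hQ0 hQ1.le)).trans
      (pow_le_pow_left₀ (abs_nonneg x) hx n)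
  exact mul_le_mul (inv_qp_le_inv_qpInf le_rfl hQ0 hQ1 hQ0 hQ1 n) hxr (by positivity)
    (inv_nonneg.2 (qpInf_pos hQ1 hQ0 hQ1).le)

lemma summable_eulerTerm (hx : |x| < 1) : Summable (eulerTerm Q x) :=
  ((summable_geometric_of_lt_one (abs_nonneg x) hx).mul_left _).of_norm_bounded
    (abs_eulerTerm_le hQ0 hQ1 le_rfl)

lemma continuousOn_tsum_eulerTerm {r : ℝ} (hr0 : 0 ≤ r) (hr : r < 1) :
    ContinuousOn (fun y => ∑' n, eulerTerm Q y n) (closedBall 0 r) := by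
  refine continuousOn_tsum (fun n => ?_) ((summable_geometric_of_lt_one hr0 hr).mul_left _)
    fun n y hy => abs_eulerTerm_le hQ0 hQ1 (by simpa using hy) n
  unfold eulerTerm
  fun_prop

lemma eulerTerm_succ_sub (n : ℕ) :
    eulerTerm Q x (n + 1) - eulerTerm Q (x * Q) (n + 1) = -x * eulerTerm Q (x * Q) n := by
  have hqp := (qp_pos hQ1 hQ0 hQ1.le n).ne'
  have hfac : 1 - Q * Q ^ n ≠ 0 := (sub_pos.2 (mul_pow_lt_one hQ1 hQ0 hQ1.le n)).ne'
  simp only [eulerTerm, qp_succ, Nat.choose_succ_succ', Nat.choose_one_right]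
  field_simp
  ring

lemma tsum_eulerTerm_eq (hx : |x| < 1) :
    ∑' n, eulerTerm Q x n = (1 - x) * ∑' n, eulerTerm Q (x * Q) n := by
  have hxQ : |x * Q| < 1 := by simpa using (abs_mul_pow_le x hQ0 hQ1.le 1).trans_lt hx
  have hs := summable_eulerTerm hQ0 hQ1 hx
  have hsQ := summable_eulerTerm hQ0 hQ1 hxQ
  have key : ∑' n, eulerTerm Q x n - ∑' n, eulerTerm Q (x * Q) n =
      -x * ∑' n, eulerTerm Q (x * Q) n := calc
    _ = ∑' n, (eulerTerm Q x (n + 1) - eulerTerm Q (x * Q) (n + 1)) := by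
      rw [hs.tsum_eq_zero_add, hsQ.tsum_eq_zero_add,
        Summable.tsum_sub ((summable_nat_add_iff 1).2 hs) ((summable_nat_add_iff 1).2 hsQ)]
      simp [eulerTerm, qp]
    _ = ∑' n, -x * eulerTerm Q (x * Q) n := by simp only [eulerTerm_succ_sub hQ0 hQ1]
    _ = _ := tsum_mul_left
  linear_combination key

theorem hasSum_eulerTerm (hx : |x| < 1) : HasSum (eulerTerm Q x) (qpInf x Q) := by
  have iterate : ∀ N : ℕ, ∀ y, |y| < 1 →
      ∑' n, eulerTerm Q y n = qp y Q N * ∑' n, eulerTerm Q (y * Q ^ N) n := by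
    intro N
    induction N with
    | zero => simp [qp]
    | succ N ih =>
      intro y hy
      have hyQ : |y * Q| < 1 := by simpa using (abs_mul_pow_le y hQ0 hQ1.le 1).trans_lt hy
      rw [tsum_eulerTerm_eq hQ0 hQ1 hy, ih _ hyQ, qp_succ', pow_succ', mul_assoc y, mul_assoc]
  have hE0 : ∑' n, eulerTerm Q 0 n = 1 := by
    rw [tsum_eq_single 0 fun n hn => by simp [eulerTerm, zero_pow hn]]
    simp [eulerTerm, qp]
  have lim := ((hasProd_qpInf x (by rwa [abs_of_nonneg hQ0])).tendsto_prod_nat).mul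
    (tendsto_comp_mul_pow (continuousOn_tsum_eulerTerm hQ0 hQ1 (abs_nonneg x) hx) le_rfl hQ0 hQ1)
  rw [hE0, mul_one] at lim
  exact (summable_eulerTerm hQ0 hQ1 hx).hasSum_iff.2
    (tendsto_nhds_unique (tendsto_const_nhds.congr fun N => iterate N x hx) lim)

lemma tsum_eulerTerm_div_one_sub {z : ℝ} (hx : |x| < 1) (hz : |z| < 1) :
    ∑' n, eulerTerm Q x n / (1 - z * Q ^ n) = ∑' j, z ^ j * qpInf (x * Q ^ j) Q := by
  set T : ℕ → ℕ → ℝ := fun n j => eulerTerm Q x n * (z * Q ^ n) ^ j with hT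
  have hsum : Summable (Function.uncurry T) := by
    refine Summable.of_norm_bounded (((summable_geometric_of_lt_one (abs_nonneg x) hx).mul_left
      (qpInf Q Q)⁻¹).mul_of_nonneg (summable_geometric_of_lt_one (abs_nonneg z) hz)
      (fun n => mul_nonneg (inv_nonneg.2 (qpInf_pos hQ1 hQ0 hQ1).le) (by positivity))
      fun j => by positivity) fun p => ?_
    rw [Real.norm_eq_abs, Function.uncurry_apply_pair, hT, abs_mul, abs_pow]
    exact mul_le_mul (abs_eulerTerm_le hQ0 hQ1 le_rfl p.1)
      (pow_le_pow_left₀ (abs_nonneg _) (abs_mul_pow_le z hQ0 hQ1.le p.1) p.2) (by positivity)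
      (mul_nonneg (inv_nonneg.2 (qpInf_pos hQ1 hQ0 hQ1).le) (by positivity))
  have hrow : ∀ n, ∑' j, T n j = eulerTerm Q x n / (1 - z * Q ^ n) := fun n => by
    rw [tsum_mul_left, tsum_geometric_of_abs_lt_one ((abs_mul_pow_le z hQ0 hQ1.le n).trans_lt hz),
      div_eq_mul_inv]
  have hcol : ∀ j, ∑' n, T n j = z ^ j * qpInf (x * Q ^ j) Q := fun j => by
    rw [← (hasSum_eulerTerm hQ0 hQ1 ((abs_mul_pow_le x hQ0 hQ1.le j).trans_lt hx)).tsum_eq,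
      ← tsum_mul_left]
    refine tsum_congr fun n => ?_
    simp only [hT, eulerTerm, mul_pow, ← pow_mul, mul_comm n j]
    ring
  rw [← tsum_congr hrow, ← hsum.tsum_comm, tsum_congr hcol]

end Euler

noncomputable def fineTermF (a Q t : ℝ) (n : ℕ) : ℝ := t ^ n / qp a Q (n + 1)

noncomputable def fineTermG (a Q t : ℝ) (n : ℕ) : ℝ :=
  a ^ n * Q ^ (n ^ 2) * t ^ n / (qp a Q (n + 1) * qp t Q (n + 1))

lemma tsum_sub_succ {w : ℕ → ℝ} (hw : Summable w) : ∑' n, (w n - w (n + 1)) = w 0 := by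
  rw [hw.tsum_sub ((summable_nat_add_iff 1).2 hw), hw.tsum_eq_zero_add]
  ring

lemma one_sub_mul_tsum_eq_of_telescope {X : ℝ → ℕ → ℝ} {w : ℕ → ℝ} {a t Q : ℝ}
    (hX : Summable (X t)) (hXQ : Summable (X (t * Q))) (hw : Summable w) (hw0 : w 0 = 1)
    (htele : ∀ n, (1 - t) * X t n - a * X (t * Q) n = w n - w (n + 1)) :
    (1 - t) * ∑' n, X t n = 1 + a * ∑' n, X (t * Q) n := by
  have h : ∑' n, ((1 - t) * X t n - a * X (t * Q) n) = ∑' n, (w n - w (n + 1)) :=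
    tsum_congr htele
  rw [tsum_sub_succ hw, hw0, Summable.tsum_sub (hX.mul_left _) (hXQ.mul_left _), tsum_mul_left,
    tsum_mul_left] at h
  linear_combination h

section Fine

variable {a Q t : ℝ} (ha0 : 0 ≤ a) (ha1 : a < 1) (hQ0 : 0 ≤ Q) (hQ1 : Q < 1)

include ha1 hQ0 hQ1 in
lemma fineTermF_telescope (n : ℕ) :
    (1 - t) * fineTermF a Q t n - a * fineTermF a Q (t * Q) n =
      (1 - a * Q ^ n) * fineTermF a Q t n - (1 - a * Q ^ (n + 1)) * fineTermF a Q t (n + 1) := by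
  have h1 := (qp_pos ha1 hQ0 hQ1.le (n + 1)).ne'
  have h2 := (sub_pos.2 (mul_pow_lt_one ha1 hQ0 hQ1.le (n + 1))).ne'
  simp only [fineTermF]
  rw [qp_succ a Q (n + 1)]
  field_simp
  ring

include ha1 hQ0 hQ1 in
lemma fineTermG_telescope (ht : t < 1) (n : ℕ) :
    (1 - t) * fineTermG a Q t n - a * fineTermG a Q (t * Q) n =
      (1 - t) * ((1 - a * Q ^ n) * fineTermG a Q t n) -
        (1 - t) * ((1 - a * Q ^ (n + 1)) * fineTermG a Q t (n + 1)) := by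
  have htQ : t * Q < 1 := by simpa using mul_pow_lt_one ht hQ0 hQ1.le 1
  have h1 := (qp_pos ha1 hQ0 hQ1.le n).ne'
  have h2 := (sub_pos.2 (mul_pow_lt_one ha1 hQ0 hQ1.le n)).ne'
  have h3 := (sub_pos.2 (mul_pow_lt_one ha1 hQ0 hQ1.le (n + 1))).ne'
  have h4 := (sub_pos.2 ht).ne'
  have h5 := (qp_pos htQ hQ0 hQ1.le n).ne'
  have h6 := (sub_pos.2 (mul_pow_lt_one htQ hQ0 hQ1.le n)).ne'
  simp only [fineTermG]
  rw [qp_succ' t Q (n + 1), qp_succ' t Q n, qp_succ a Q (n + 1), qp_succ (t * Q) Q n,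
    qp_succ a Q n]
  generalize hX : 1 - t * Q * Q ^ n = X at h6 ⊢
  field_simp
  rw [← hX]
  ring

include ha0 ha1 hQ0 hQ1

lemma summable_one_sub_mul_pow_mul {f : ℕ → ℝ} (hf : Summable f) :
    Summable fun n => (1 - a * Q ^ n) * f n := by
  refine hf.norm.of_norm_bounded fun n => ?_
  rw [norm_mul]
  refine mul_le_of_le_one_left (norm_nonneg _) ?_
  rw [Real.norm_eq_abs, abs_le]
  constructor
  · linarith [mul_pow_lt_one ha1 hQ0 hQ1.le n]
  · linarith [mul_nonneg ha0 (pow_nonneg hQ0 n)]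

lemma abs_fineTermF_le {r : ℝ} (ht : |t| ≤ r) (n : ℕ) :
    |fineTermF a Q t n| ≤ (qpInf a Q)⁻¹ * r ^ n := by
  rw [fineTermF, abs_div, abs_of_pos (qp_pos ha1 hQ0 hQ1.le _), div_eq_inv_mul, abs_pow]
  exact mul_le_mul (inv_qp_le_inv_qpInf le_rfl ha0 ha1 hQ0 hQ1 _)
    (pow_le_pow_left₀ (abs_nonneg t) ht n) (by positivity)
    (inv_nonneg.2 (qpInf_pos ha1 hQ0 hQ1).le)

lemma abs_fineTermG_le {r : ℝ} (ht : |t| ≤ r) (hr : r < 1) (n : ℕ) :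
    |fineTermG a Q t n| ≤ (qpInf a Q)⁻¹ * (qpInf r Q)⁻¹ * r ^ n := by
  have hr0 : 0 ≤ r := (abs_nonneg t).trans ht
  have htr : t ≤ r := (le_abs_self t).trans ht
  have hpt := qp_pos (htr.trans_lt hr) hQ0 hQ1.le (n + 1)
  rw [fineTermG, abs_div, abs_of_pos (mul_pos (qp_pos ha1 hQ0 hQ1.le _) hpt), div_eq_inv_mul,
    mul_inv]
  simp only [abs_mul, abs_pow, abs_of_nonneg ha0, abs_of_nonneg hQ0]
  have hcoef : a ^ n * Q ^ n ^ 2 * |t| ^ n ≤ r ^ n :=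
    (mul_le_of_le_one_left (by positivity)
      (mul_le_one₀ (pow_le_one₀ ha0 ha1.le) (by positivity) (pow_le_one₀ hQ0 hQ1.le))).trans
      (pow_le_pow_left₀ (abs_nonneg t) ht n)
  have hinv := inv_nonneg.2 (qpInf_pos ha1 hQ0 hQ1).le
  exact mul_le_mul (mul_le_mul (inv_qp_le_inv_qpInf le_rfl ha0 ha1 hQ0 hQ1 _)
      (inv_qp_le_inv_qpInf htr hr0 hr hQ0 hQ1 _) (inv_nonneg.2 hpt.le) hinv)
    hcoef (by positivity) (mul_nonneg hinv (inv_nonneg.2 (qpInf_pos hr hQ0 hQ1).le))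

lemma summable_fineTermF (ht : |t| < 1) : Summable (fineTermF a Q t) :=
  ((summable_geometric_of_lt_one (abs_nonneg t) ht).mul_left _).of_norm_bounded
    (abs_fineTermF_le ha0 ha1 hQ0 hQ1 le_rfl)

lemma summable_fineTermG (ht : |t| < 1) : Summable (fineTermG a Q t) :=
  ((summable_geometric_of_lt_one (abs_nonneg t) ht).mul_left _).of_norm_bounded
    (abs_fineTermG_le ha0 ha1 hQ0 hQ1 le_rfl ht)

lemma continuousOn_tsum_fineTermF {r : ℝ} (hr0 : 0 ≤ r) (hr : r < 1) :
    ContinuousOn (fun y => ∑' n, fineTermF a Q y n) (closedBall 0 r) := by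
  refine continuousOn_tsum (fun n => ?_) ((summable_geometric_of_lt_one hr0 hr).mul_left _)
    fun n y hy => abs_fineTermF_le ha0 ha1 hQ0 hQ1 (by simpa using hy) n
  unfold fineTermF
  fun_prop

lemma continuousOn_tsum_fineTermG {r : ℝ} (hr0 : 0 ≤ r) (hr : r < 1) :
    ContinuousOn (fun y => ∑' n, fineTermG a Q y n) (closedBall 0 r) := by
  refine continuousOn_tsum (fun n => ?_) ((summable_geometric_of_lt_one hr0 hr).mul_left _)
    fun n y hy => abs_fineTermG_le ha0 ha1 hQ0 hQ1 (by simpa using hy) hr n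
  refine ContinuousOn.div (by fun_prop) (by unfold qp; fun_prop) fun y hy => ?_
  have hy1 : y < 1 := (le_abs_self y).trans_lt ((by simpa using hy : |y| ≤ r).trans_lt hr)
  exact (mul_pos (qp_pos ha1 hQ0 hQ1.le _) (qp_pos hy1 hQ0 hQ1.le _)).ne'

lemma tsum_fineTermF_feq (ht : |t| < 1) :
    (1 - t) * ∑' n, fineTermF a Q t n = 1 + a * ∑' n, fineTermF a Q (t * Q) n := by
  have hs := summable_fineTermF ha0 ha1 hQ0 hQ1 ht
  have htQ : |t * Q| < 1 := by simpa using (abs_mul_pow_le t hQ0 hQ1.le 1).trans_lt ht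
  refine one_sub_mul_tsum_eq_of_telescope hs (summable_fineTermF ha0 ha1 hQ0 hQ1 htQ)
    (summable_one_sub_mul_pow_mul ha0 ha1 hQ0 hQ1 hs) ?_ (fineTermF_telescope ha1 hQ0 hQ1)
  simp [fineTermF, qp, (sub_pos.2 ha1).ne']

lemma tsum_fineTermG_feq (ht : |t| < 1) :
    (1 - t) * ∑' n, fineTermG a Q t n = 1 + a * ∑' n, fineTermG a Q (t * Q) n := by
  have ht1 : t < 1 := (le_abs_self t).trans_lt ht
  have hs := summable_fineTermG ha0 ha1 hQ0 hQ1 ht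
  have htQ : |t * Q| < 1 := by simpa using (abs_mul_pow_le t hQ0 hQ1.le 1).trans_lt ht
  refine one_sub_mul_tsum_eq_of_telescope hs (summable_fineTermG ha0 ha1 hQ0 hQ1 htQ)
    ((summable_one_sub_mul_pow_mul ha0 ha1 hQ0 hQ1 hs).mul_left (1 - t)) ?_
    (fineTermG_telescope ha1 hQ0 hQ1 ht1)
  simp only [fineTermG, qp, zero_add, prod_range_one, pow_zero, mul_one,
    zero_pow two_ne_zero]
  field_simp [(sub_pos.2 ha1).ne', (sub_pos.2 ht1).ne']

theorem tsum_fineTermF_eq_tsum_fineTermG (ht : |t| < 1) :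
    ∑' n, fineTermF a Q t n = ∑' n, fineTermG a Q t n := by
  set d : ℝ → ℝ := fun y => ∑' n, fineTermF a Q y n - ∑' n, fineTermG a Q y n with hd
  have iterate : ∀ N : ℕ, ∀ y, |y| < 1 → qp y Q N * d y = a ^ N * d (y * Q ^ N) := by
    intro N
    induction N with
    | zero => simp [qp]
    | succ N ih =>
      intro y hy
      have hyQ : |y * Q| < 1 := by simpa using (abs_mul_pow_le y hQ0 hQ1.le 1).trans_lt hy
      have hfeq : (1 - y) * d y = a * d (y * Q) := by
        simp only [hd]
        linear_combination tsum_fineTermF_feq ha0 ha1 hQ0 hQ1 hy -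
          tsum_fineTermG_feq ha0 ha1 hQ0 hQ1 hy
      rw [qp_succ', mul_comm (1 - y), mul_assoc, hfeq, mul_left_comm, ih _ hyQ, pow_succ',
        pow_succ', mul_assoc y]
      ring
  have hcont : ContinuousOn d (closedBall 0 |t|) :=
    (continuousOn_tsum_fineTermF ha0 ha1 hQ0 hQ1 (abs_nonneg t) ht).sub
      (continuousOn_tsum_fineTermG ha0 ha1 hQ0 hQ1 (abs_nonneg t) ht)
  have lim := (tendsto_pow_atTop_nhds_zero_of_lt_one ha0 ha1).mul
    (tendsto_comp_mul_pow hcont le_rfl hQ0 hQ1)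
  rw [zero_mul] at lim
  have hprod : qpInf t Q * d t = 0 := tendsto_nhds_unique
    (((hasProd_qpInf t (by rwa [abs_of_nonneg hQ0])).tendsto_prod_nat.mul_const (d t)).congr
      fun N => iterate N t ht) lim
  have ht1 : t < 1 := (le_abs_self t).trans_lt ht
  exact sub_eq_zero.1 ((mul_eq_zero.1 hprod).resolve_left (qpInf_pos ht1 hQ0 hQ1).ne')

end Fine

lemma succ_sq_eq_choose_two (n : ℕ) : (n + 1) ^ 2 = 1 + 2 * n.choose 2 + 3 * n := by
  induction n with
  | zero => rfl
  | succ n ih =>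
    rw [Nat.choose_succ_succ', Nat.choose_one_right]
    nlinarith [ih]

lemma summand_eq_neg_mul_eulerTerm_div {q : ℝ} (hq0 : 0 ≤ q) (hq1 : q < 1) (n : ℕ) :
    (-1 : ℝ) ^ (n + 1) * qp q (q ^ 2) n * q ^ ((n + 1) ^ 2) / qp q q (2 * n + 1) =
      -q * (eulerTerm (q ^ 2) (q ^ 3) n / (1 - q * (q ^ 2) ^ n)) := by
  have hQ1 : q ^ 2 < 1 := pow_lt_one₀ hq0 hq1 two_ne_zero
  have h1 := (qp_pos hq1 (sq_nonneg q) hQ1.le n).ne'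
  have h2 := (qp_pos hQ1 (sq_nonneg q) hQ1.le n).ne'
  have h3 := (sub_pos.2 (mul_pow_lt_one hq1 (sq_nonneg q) hQ1.le n)).ne'
  rw [qp_succ, qp_two_mul, ← sq, ← pow_mul, eulerTerm, succ_sq_eq_choose_two, pow_add, pow_add,
    pow_mul, pow_mul]
  field_simp
  ring

lemma pow_mul_qpInf_eq_qpInf_mul_fineTermF {q : ℝ} (hq0 : 0 ≤ q) (hq1 : q < 1) (j : ℕ) :
    q ^ j * qpInf (q ^ 3 * (q ^ 2) ^ j) (q ^ 2) = qpInf q (q ^ 2) * fineTermF q (q ^ 2) q j := by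
  have hQ1 : q ^ 2 < 1 := pow_lt_one₀ hq0 hq1 two_ne_zero
  rw [qpInf_eq_qp_mul q (by rwa [abs_of_nonneg (sq_nonneg q)]) (j + 1), fineTermF,
    show q * (q ^ 2) ^ (j + 1) = q ^ 3 * (q ^ 2) ^ j by ring]
  field_simp [(qp_pos hq1 (sq_nonneg q) hQ1.le (j + 1)).ne']

lemma fineTermG_self (q : ℝ) (n : ℕ) :
    fineTermG q (q ^ 2) q n = q ^ (2 * n * (n + 1)) / (qp q (q ^ 2) (n + 1)) ^ 2 := by
  rw [fineTermG, sq (qp q (q ^ 2) (n + 1))]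
  ring

theorem stmt16 (q : ℝ) (hq0 : 0 < q) (hq1 : q < 1) :
    (∑' n : ℕ, (-1 : ℝ) ^ (n + 1) * qp q (q ^ 2) n * q ^ ((n + 1) ^ 2) / qp q q (2 * n + 1)) =
      (-q / qpInf (-q) q) * ∑' n : ℕ, q ^ (2 * n * (n + 1)) / (qp q (q ^ 2) (n + 1)) ^ 2 := by
  have hq : |q| < 1 := by rwa [abs_of_pos hq0]
  have hQ0 : 0 ≤ q ^ 2 := sq_nonneg q
  have hQ1 : q ^ 2 < 1 := pow_lt_one₀ hq0.le hq1 two_ne_zero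
  have hq3 : |q ^ 3| < 1 := by rw [abs_pow]; exact pow_lt_one₀ (abs_nonneg q) hq three_ne_zero
  calc (∑' n : ℕ, (-1 : ℝ) ^ (n + 1) * qp q (q ^ 2) n * q ^ ((n + 1) ^ 2) /
          qp q q (2 * n + 1))
      = -q * ∑' n, eulerTerm (q ^ 2) (q ^ 3) n / (1 - q * (q ^ 2) ^ n) := by
        simp only [summand_eq_neg_mul_eulerTerm_div hq0.le hq1, tsum_mul_left]
    _ = -q * ∑' j : ℕ, q ^ j * qpInf (q ^ 3 * (q ^ 2) ^ j) (q ^ 2) := by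
        rw [tsum_eulerTerm_div_one_sub hQ0 hQ1 hq3 hq]
    _ = -q * qpInf q (q ^ 2) * ∑' n, fineTermF q (q ^ 2) q n := by
        rw [tsum_congr (pow_mul_qpInf_eq_qpInf_mul_fineTermF hq0.le hq1), tsum_mul_left,
          mul_assoc]
    _ = -q * qpInf q (q ^ 2) * ∑' n, fineTermG q (q ^ 2) q n := by
        rw [tsum_fineTermF_eq_tsum_fineTermG hq0.le hq1 hQ0 hQ1 hq]
    _ = _ := by
        rw [tsum_congr (fineTermG_self q), div_eq_mul_inv,
          ← eq_inv_of_mul_eq_one_right (qpInf_neg_mul_qpInf_sq hq0.le hq1)]
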